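/- Let V be a finite-dimensional real vector space, C ⊆ V a convex cone, D ∈ C, and c : V → ℝ a linear functional with c(D) < 0. Suppose every element of C is a finite nonnegative combination of elements of a set S ⊆ C, and that c(E) ≥ 0 for all E ∈ S except for elements proportional to D. Then every x ∈ C with c(x) < 0 can be written as x = λD + y with λ > 0, y ∈ C, and c(y) ≥ 0. -/

import Mathlib

/-!
Write `x` as a nonnegative combination of generators and split the sum according to whether
the generator lies on the line `ℝ ∙ D`. The first part is a multiple `μ • D`, the second part `y`
lies in `C` and has `c y ≥ 0`; then `c x = μ * c D + c y < 0` together with `c D < 0` forces `μ > 0`.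
-/

open Finset

section

variable {V ι : Type*} [AddCommGroup V] [Module ℝ V]

theorem sum_smul_mem_of_nonneg {C : Set V} (h0 : (0 : V) ∈ C)
    (hCadd : ∀ x ∈ C, ∀ y ∈ C, x + y ∈ C)
    (hCsmul : ∀ (t : ℝ), 0 ≤ t → ∀ x ∈ C, t • x ∈ C)
    {s : Finset ι} {f : ι → ℝ} {g : ι → V} (hf : ∀ i ∈ s, 0 ≤ f i) (hg : ∀ i ∈ s, g i ∈ C) :
    ∑ i ∈ s, f i • g i ∈ C :=
  Finset.sum_induction _ (· ∈ C) (fun a b ha hb => hCadd a ha b hb) h0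
    fun i hi => hCsmul (f i) (hf i hi) _ (hg i hi)

theorem apply_sum_smul_nonneg (c : V →ₗ[ℝ] ℝ) {s : Finset ι} {f : ι → ℝ} {g : ι → V}
    (hf : ∀ i ∈ s, 0 ≤ f i) (hg : ∀ i ∈ s, 0 ≤ c (g i)) :
    0 ≤ c (∑ i ∈ s, f i • g i) := by
  rw [map_sum]
  exact sum_nonneg fun i hi => by
    rw [map_smul, smul_eq_mul]
    exact mul_nonneg (hf i hi) (hg i hi)

theorem exists_sum_smul_eq_smul_add (D : V) [DecidablePred (· ∈ ℝ ∙ D)] (s : Finset ι)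
    (f : ι → ℝ) (g : ι → V) :
    ∃ μ : ℝ, ∑ i ∈ s, f i • g i = μ • D + ∑ i ∈ s with g i ∉ ℝ ∙ D, f i • g i := by
  have hline : ∑ i ∈ s with g i ∈ ℝ ∙ D, f i • g i ∈ ℝ ∙ D :=
    Submodule.sum_mem _ fun i hi => Submodule.smul_mem _ _ (mem_filter.1 hi).2
  obtain ⟨μ, hμ⟩ := Submodule.mem_span_singleton.1 hline
  exact ⟨μ, by rw [hμ, sum_filter_add_sum_filter_not]⟩

theorem pos_of_apply_smul_add_neg (c : V →ₗ[ℝ] ℝ) {D y : V} {μ : ℝ} (hcD : c D < 0)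
    (hcy : 0 ≤ c y) (hcx : c (μ • D + y) < 0) : 0 < μ := by
  rw [map_add, map_smul, smul_eq_mul] at hcx
  by_contra! hμ
  nlinarith [mul_nonneg_of_nonpos_of_nonpos hμ hcD.le]

end

theorem stmt_16_general {V : Type*} [AddCommGroup V] [Module ℝ V]
    (C S : Set V) (hSC : S ⊆ C)
    (hCadd : ∀ x ∈ C, ∀ y ∈ C, x + y ∈ C)
    (hCsmul : ∀ (t : ℝ), 0 ≤ t → ∀ x ∈ C, t • x ∈ C)
    (D : V)
    (c : V →ₗ[ℝ] ℝ) (hcD : c D < 0)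
    (hgen : ∀ x ∈ C, ∃ (k : ℕ) (f : Fin k → ℝ) (g : Fin k → V),
      (∀ i, 0 ≤ f i) ∧ (∀ i, g i ∈ S) ∧ x = ∑ i, f i • g i)
    (hS : ∀ E ∈ S, (¬ ∃ t : ℝ, E = t • D) → 0 ≤ c E) :
    ∀ x ∈ C, c x < 0 →
      ∃ l : ℝ, 0 < l ∧ ∃ y ∈ C, x = l • D + y ∧ 0 ≤ c y := by
  classical
  intro x hx hcx
  obtain ⟨k, f, g, hf, hg, rfl⟩ := hgen x hx
  obtain ⟨μ, hμ⟩ := exists_sum_smul_eq_smul_add D univ f g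
  set y := ∑ i with g i ∉ ℝ ∙ D, f i • g i
  have h0C : (0 : V) ∈ C := by simpa using hCsmul 0 le_rfl _ hx
  have hyC : y ∈ C :=
    sum_smul_mem_of_nonneg h0C hCadd hCsmul (fun i _ => hf i) fun i _ => hSC (hg i)
  have hcy : 0 ≤ c y := by
    refine apply_sum_smul_nonneg c (fun i _ => hf i) fun i hi => hS _ (hg i) ?_
    simpa [Submodule.mem_span_singleton, eq_comm] using (mem_filter.1 hi).2
  rw [hμ] at hcx ⊢
  exact ⟨μ, pos_of_apply_smul_add_neg c hcD hcy hcx, y, hyC, rfl, hcy⟩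

/-- if every element of the convex cone `C` is a finite nonnegative
combination of elements of `S ⊆ C`, `D ∈ C` satisfies `c D < 0`, and `c E ≥ 0` for
all `E ∈ S` except elements proportional to `D`, then every `x ∈ C` with `c x < 0`
can be written `x = λ • D + y` with `λ > 0`, `y ∈ C` and `c y ≥ 0`. -/
theorem stmt_16 {V : Type*} [AddCommGroup V] [Module ℝ V] [FiniteDimensional ℝ V]
    (C S : Set V) (hSC : S ⊆ C)
    (hCadd : ∀ x ∈ C, ∀ y ∈ C, x + y ∈ C)
    (hCsmul : ∀ (t : ℝ), 0 ≤ t → ∀ x ∈ C, t • x ∈ C)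
    (D : V) (hD : D ∈ C)
    (c : V →ₗ[ℝ] ℝ) (hcD : c D < 0)
    (hgen : ∀ x ∈ C, ∃ (k : ℕ) (f : Fin k → ℝ) (g : Fin k → V),
      (∀ i, 0 ≤ f i) ∧ (∀ i, g i ∈ S) ∧ x = ∑ i, f i • g i)
    (hS : ∀ E ∈ S, (¬ ∃ t : ℝ, E = t • D) → 0 ≤ c E) :
    ∀ x ∈ C, c x < 0 →
      ∃ l : ℝ, 0 < l ∧ ∃ y ∈ C, x = l • D + y ∧ 0 ≤ c y :=
  stmt_16_general C S hSC hCadd hCsmul D c hcD hgen hS
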